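/- arXiv:1408.1799 — 3 statements merged into one kernel-verified Lean document; each statement's English description precedes it below -/
import Mathlib

section
/- Assume G and f satisfy the rewiring properties (H1) and (H2). Let u and v be reachable vertices with f u = f v and G.dist u v ≥ 4. Then there exists a vertex w with f w = f u such that G.dist u v = G.dist u w + G.dist w v and 2 ≤ G.dist u w ≤ G.dist u v − 2. (Abstract form of Proposition 2.4(1): if L and L' are m-component links with coherent band-Gordian distance d(L,L') ≥ 4, then there exists an m-component link L'' with d(L,L') = d(L,L'') + d(L'',L') and 2 ≤ d(L,L'') ≤ d(L,L') − 2; the rewiring properties are the content of Lemma 2.2.) -/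
/-!
Follow a geodesic `u = x₀, x₁, …, xₙ = v`. Since `f v = f u`, the walk from `x₁` must come back
to the level `f u`. Pushing the first such return backwards with the rewiring moves (H2 when the
geodesic starts upwards, H1 when it starts downwards) yields a walk `u, y, z, …, v` of the same
length `n` with `f z = f u`. Every vertex of a shortest walk splits the distance, so `z` is at
distance `2` from `u` and `n - 2` from `v`.
-/

open SimpleGraph

namespace SimpleGraph

variable {V : Type*} {G : SimpleGraph V}

lemma dist_eq_length_and_dist_eq_length_of_length_add_eq_dist {u z v : V}
    (r : G.Walk u z) (q : G.Walk z v) (h : r.length + q.length = G.dist u v) :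
    G.dist u z = r.length ∧ G.dist z v = q.length := by
  have hr := G.dist_le r
  have hq := G.dist_le q
  have htri := r.reachable.dist_triangle_left v
  omega

end SimpleGraph

section Rewiring

variable {V : Type*} {G : SimpleGraph V} {f : V → ℤ}

lemma eq_add_one_or_eq_sub_one_of_adj (hf : ∀ u v : V, G.Adj u v → |f u - f v| = 1)
    {a b : V} (h : G.Adj a b) : f b = f a + 1 ∨ f b = f a - 1 := by
  rcases abs_eq zero_le_one |>.mp (hf a b h) with h | h <;> omega

lemma exists_return_of_step_up (hf : ∀ u v : V, G.Adj u v → |f u - f v| = 1)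
    (H2 : ∀ (m : ℤ) (x₀ x₁ x₂ x₃ : V), G.Adj x₀ x₁ → G.Adj x₁ x₂ → G.Adj x₂ x₃ →
      f x₀ = m - 1 → f x₁ = m → f x₂ = m + 1 → f x₃ = m →
      ∃ y₁ y₂ : V, G.Adj x₀ y₁ ∧ G.Adj y₁ y₂ ∧ G.Adj y₂ x₃ ∧ f y₁ = m ∧ f y₂ = m - 1)
    {x₁ v : V} (p : G.Walk x₁ v) {x₀ : V} (h₀ : G.Adj x₀ x₁) (hx₁ : f x₁ = f x₀ + 1)
    (hv : f v ≤ f x₀) :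
    ∃ y z, G.Adj x₀ y ∧ G.Adj y z ∧ f y = f x₀ + 1 ∧ f z = f x₀ ∧
      ∃ q : G.Walk z v, q.length + 1 = p.length := by
  induction p generalizing x₀ with
  | nil => omega
  | @cons a b _ hab p ih =>
    rcases eq_add_one_or_eq_sub_one_of_adj hf hab with hb | hb
    · -- `p` starts from level `f x₀ + 2`: return from there first, then lower the peak by H2
      obtain ⟨y, z, hay, hyz, hy, hz, q, hq⟩ := ih hab hb (by omega)
      obtain ⟨y₁, y₂, h₁, h₁₂, h₂, hy₁, hy₂⟩ :=
        H2 (f x₀ + 1) x₀ a y z h₀ hay hyz (by omega) hx₁ (by omega) (by omega)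
      exact ⟨y₁, y₂, h₁, h₁₂, hy₁, by omega, .cons h₂ q, by simp [hq]⟩
    · exact ⟨a, b, h₀, hab, hx₁, by omega, p, by simp⟩

lemma exists_return_of_step_down (hf : ∀ u v : V, G.Adj u v → |f u - f v| = 1)
    (H1 : ∀ (m : ℤ) (u w v : V), G.Adj u w → G.Adj w v →
      f u = m → f w = m - 1 → f v = m →
      ∃ w' : V, G.Adj u w' ∧ G.Adj w' v ∧ f w' = m + 1)
    {x₁ v : V} (p : G.Walk x₁ v) {x₀ : V} (h₀ : G.Adj x₀ x₁) (hx₁ : f x₁ = f x₀ - 1)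
    (hv : f x₀ ≤ f v) :
    ∃ y z, G.Adj x₀ y ∧ G.Adj y z ∧ f y = f x₀ - 1 ∧ f z = f x₀ ∧
      ∃ q : G.Walk z v, q.length + 1 = p.length := by
  induction p generalizing x₀ with
  | nil => omega
  | @cons a b _ hab p ih =>
    rcases eq_add_one_or_eq_sub_one_of_adj hf hab with hb | hb
    · exact ⟨a, b, h₀, hab, hx₁, by omega, p, by simp⟩
    · -- `p` starts from level `f x₀ - 2`: return from there first, then raise the valley by H1
      obtain ⟨y, z, hay, hyz, hy, hz, q, hq⟩ := ih hab hb (by omega)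
      obtain ⟨w, haw, hwz, hw⟩ := H1 (f x₀ - 1) a y z hay hyz hx₁ (by omega) (by omega)
      exact ⟨a, w, h₀, haw, hx₁, by omega, .cons hwz q, by simp [hq]⟩

end Rewiring

/-- Abstract form of Proposition 2.4(1): under the rewiring properties (H1) and (H2),
if `f u = f v` and the distance between `u` and `v` is at least 4, then there is an
intermediate vertex `w` on a geodesic with `f w = f u` and `2 ≤ dist u w ≤ dist u v - 2`. -/
theorem exists_intermediate_same_level {V : Type*} (G : SimpleGraph V) (f : V → ℤ)
    (hf : ∀ u v : V, G.Adj u v → |f u - f v| = 1)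
    (H1 : ∀ (m : ℤ) (u w v : V), G.Adj u w → G.Adj w v →
      f u = m → f w = m - 1 → f v = m →
      ∃ w' : V, G.Adj u w' ∧ G.Adj w' v ∧ f w' = m + 1)
    (H2 : ∀ (m : ℤ) (x₀ x₁ x₂ x₃ : V), G.Adj x₀ x₁ → G.Adj x₁ x₂ → G.Adj x₂ x₃ →
      f x₀ = m - 1 → f x₁ = m → f x₂ = m + 1 → f x₃ = m →
      ∃ y₁ y₂ : V, G.Adj x₀ y₁ ∧ G.Adj y₁ y₂ ∧ G.Adj y₂ x₃ ∧ f y₁ = m ∧ f y₂ = m - 1)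
    (u v : V) (huv : G.Reachable u v) (hfuv : f u = f v) (hd : 4 ≤ G.dist u v) :
    ∃ w : V, f w = f u ∧ G.dist u v = G.dist u w + G.dist w v ∧
      2 ≤ G.dist u w ∧ G.dist u w ≤ G.dist u v - 2 := by
  obtain ⟨p, hp⟩ := huv.exists_walk_length_eq_dist
  cases p with
  | nil => simp at hd
  | @cons _ x₁ _ h p =>
    have hreturn : ∃ y z, G.Adj u y ∧ G.Adj y z ∧ f z = f u ∧
        ∃ q : G.Walk z v, q.length + 1 = p.length := by
      rcases eq_add_one_or_eq_sub_one_of_adj hf h with hx₁ | hx₁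
      · obtain ⟨y, z, hy, hyz, -, hz, hq⟩ := exists_return_of_step_up hf H2 p h hx₁ hfuv.ge
        exact ⟨y, z, hy, hyz, hz, hq⟩
      · obtain ⟨y, z, hy, hyz, -, hz, hq⟩ := exists_return_of_step_down hf H1 p h hx₁ hfuv.le
        exact ⟨y, z, hy, hyz, hz, hq⟩
    obtain ⟨y, z, hy, hyz, hz, q, hq⟩ := hreturn
    rw [Walk.length_cons] at hp
    have hsplit := dist_eq_length_and_dist_eq_length_of_length_add_eq_dist
      (.cons hy (.cons hyz .nil)) q (by simp only [Walk.length_cons, Walk.length_nil]; omega)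
    simp only [Walk.length_cons, Walk.length_nil] at hsplit
    exact ⟨z, hz, by omega, by omega, by omega⟩
end

section
/- Assume G and f satisfy the rewiring properties (H1) and (H2). Let u and v be reachable vertices. Then there exists a vertex w with f w = f u such that G.dist u v = G.dist u w + G.dist w v and G.dist w v = |f u − f v|. (Abstract form of Proposition 2.4(2): if L is an m-component link and L' is an m'-component link, then there exists an m-component link L'' with d(L,L') = d(L,L'') + d(L'',L') and d(L'',L') = |m − m'|; the rewiring properties are the content of Lemma 2.2.) -/
/-!
Since `f` changes by exactly one along each edge, `|f a - f b| ≤ dist a b`, with equality along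
a monotone walk. The rewirings move up-steps towards the start of a walk without changing its
length or endpoints. Pushing them all forward turns a geodesic from `v` to `u` into one that
first climbs monotonically from level `f v` to level `f u` (descends, if `f u < f v`), reaching
some `w`; this `w` lies on a geodesic and `dist v w = |f u - f v|`.
-/

namespace SimpleGraph

variable {V : Type*} {G : SimpleGraph V} {f : V → ℤ} {a b w : V}

def Walk.IsAscent (f : V → ℤ) (p : G.Walk a b) : Prop :=
  (p.length : ℤ) = f b - f a

lemma Walk.abs_sub_le_length (hf : ∀ u v, G.Adj u v → |f u - f v| ≤ 1) (p : G.Walk a b) :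
    |f b - f a| ≤ p.length := by
  induction p with
  | nil => simp
  | @cons u x y hux p ih =>
    rw [length_cons, Nat.cast_succ]
    calc |f y - f u| ≤ |f y - f x| + |f x - f u| := abs_sub_le _ _ _
      _ ≤ p.length + 1 := add_le_add ih (abs_sub_comm (f u) (f x) ▸ hf u x hux)

lemma Walk.IsAscent.of_append_left (hf : ∀ u v, G.Adj u v → |f u - f v| ≤ 1)
    {q : G.Walk a w} {r : G.Walk w b} (h : (q.append r).IsAscent f) : q.IsAscent f := by
  have hq := abs_le.mp (q.abs_sub_le_length hf)
  have hr := abs_le.mp (r.abs_sub_le_length hf)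
  unfold IsAscent at *
  rw [length_append, Nat.cast_add] at h
  linarith

lemma Walk.IsAscent.take (hf : ∀ u v, G.Adj u v → |f u - f v| ≤ 1) {p : G.Walk a b}
    (hp : p.IsAscent f) (k : ℕ) : (p.take k).IsAscent f :=
  of_append_left hf (r := p.drop k) (by rwa [append_take_drop_eq])

/-- (H1) is the case `k = 1` for `f`; (H2), read along the reversed walk, is the case `k = 2`
for `-f`. -/
def LiftsValleys (G : SimpleGraph V) (f : V → ℤ) (k : ℕ) : Prop :=
  ∀ ⦃a x z : V⦄, G.Adj a x → f x = f a - 1 → ∀ q : G.Walk x z, q.length = k → q.IsAscent f →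
    ∃ y, G.Adj a y ∧ f y = f a + 1 ∧ ∃ r : G.Walk y z, r.length = k

theorem Walk.exists_isAscent_append (hf : ∀ u v, G.Adj u v → |f u - f v| = 1) {k : ℕ}
    (hk : k ≤ 2) (hlift : G.LiftsValleys f k) (p : G.Walk a b) (hab : f a ≤ f b) :
    ∃ w, f w = f b ∧ ∃ (q : G.Walk a w) (r : G.Walk w b),
      q.IsAscent f ∧ q.length + r.length = p.length := by
  induction hn : p.length using Nat.strong_induction_on generalizing a with
  | _ n ih =>
  rcases hab.eq_or_lt with hab | hab
  · exact ⟨a, hab, .nil, p, by simp [IsAscent, hab], by simp [hn]⟩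
  cases p with
  | nil => exact absurd hab (lt_irrefl _)
  | @cons _ x _ hax p =>
  rw [length_cons] at hn
  have hf' u v (h : G.Adj u v) : |f u - f v| ≤ 1 := (hf u v h).le
  have hxb : f x ≤ f b := by have := abs_le.mp (hf' a x hax); omega
  obtain ⟨w, hw, q, r, hq, hqr⟩ := ih p.length (by omega) p hxb rfl
  unfold IsAscent at hq
  rcases (abs_eq zero_le_one).mp (hf a x hax) with hx | hx
  · -- a valley at `x`, followed by an ascent of length `f b - f x ≥ 2 ≥ k`: lift it and recurse
    -- on the walk after the new up-step
    obtain ⟨y, hay, hy, s, hs⟩ :=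
      hlift hax (by omega) (q.take k) (by rw [take_length]; omega) (IsAscent.take hf' hq k)
    obtain ⟨w', hw', q', r', hq', hqr'⟩ :=
      ih (s.append ((q.drop k).append r)).length
        (by simp only [length_append, drop_length]; omega) _ (by omega) rfl
    refine ⟨w', hw', .cons hay q', r', ?_, ?_⟩
    · unfold IsAscent at hq' ⊢
      rw [length_cons]
      push_cast
      omega
    · simp only [length_cons, length_append, drop_length] at hqr' ⊢
      omega
  · refine ⟨w, hw, .cons hax q, r, ?_, by simp only [length_cons]; omega⟩
    unfold IsAscent
    rw [length_cons]
    push_cast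
    omega

lemma dist_eq_length_of_length_add_length_eq_dist (q : G.Walk a w) (r : G.Walk w b)
    (h : q.length + r.length = G.dist a b) : G.dist a w = q.length ∧ G.dist w b = r.length := by
  have := q.reachable.dist_triangle_left b
  have := dist_le q
  have := dist_le r
  omega

theorem exists_dist_eq_dist_add_dist_of_liftsValleys
    (hf : ∀ u v, G.Adj u v → |f u - f v| = 1) {k : ℕ} (hk : k ≤ 2)
    (hlift : G.LiftsValleys f k) (hab : f a ≤ f b) (hr : G.Reachable a b) :
    ∃ w, f w = f b ∧ G.dist a b = G.dist a w + G.dist w b ∧ (G.dist a w : ℤ) = f b - f a := by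
  obtain ⟨p, hp⟩ := hr.exists_walk_length_eq_dist
  obtain ⟨w, hw, q, r, hq, hqr⟩ := p.exists_isAscent_append hf hk hlift hab
  obtain ⟨hdq, hdr⟩ := dist_eq_length_of_length_add_length_eq_dist q r (hqr.trans hp)
  exact ⟨w, hw, by omega, by rw [hdq, ← hw]; exact hq⟩

lemma liftsValleys_one
    (H1 : ∀ (m : ℤ) (u w v : V), G.Adj u w → G.Adj w v → f u = m → f w = m - 1 → f v = m →
      ∃ w' : V, G.Adj u w' ∧ G.Adj w' v ∧ f w' = m + 1) :
    G.LiftsValleys f 1 := by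
  intro a x z hax hx q hq hasc
  rw [Walk.IsAscent, hq, Nat.cast_one] at hasc
  obtain ⟨y, hay, hyz, hy⟩ := H1 (f a) a x z hax (q.adj_of_length_eq_one hq) rfl hx (by omega)
  exact ⟨y, hay, hy, hyz.toWalk, rfl⟩

lemma liftsValleys_neg_two (hf : ∀ u v, G.Adj u v → |f u - f v| = 1)
    (H2 : ∀ (m : ℤ) (x₀ x₁ x₂ x₃ : V), G.Adj x₀ x₁ → G.Adj x₁ x₂ → G.Adj x₂ x₃ →
      f x₀ = m - 1 → f x₁ = m → f x₂ = m + 1 → f x₃ = m →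
      ∃ y₁ y₂ : V, G.Adj x₀ y₁ ∧ G.Adj y₁ y₂ ∧ G.Adj y₂ x₃ ∧ f y₁ = m ∧ f y₂ = m - 1) :
    G.LiftsValleys (-f) 2 := by
  intro a x z hax hx q hq hasc
  rw [Walk.IsAscent, hq, Nat.cast_ofNat, Pi.neg_apply, Pi.neg_apply] at hasc
  rw [Pi.neg_apply, Pi.neg_apply] at hx
  obtain ⟨hxx₁, hzx₁⟩ :=
    G.mem_commonNeighbors.mp (G.walkLengthTwoEquivCommonNeighbors x z ⟨q, hq⟩).2
  have h₁ := (abs_eq zero_le_one).mp (hf _ _ hxx₁)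
  have h₂ := (abs_eq zero_le_one).mp (hf _ _ hzx₁.symm)
  obtain ⟨y₁, y₂, hzy₁, hy₁y₂, hy₂a, -, hy₂⟩ :=
    H2 (f a) _ _ _ _ hzx₁ hxx₁.symm hax.symm (by omega) (by omega) (by omega) rfl
  exact ⟨y₂, hy₂a.symm, by simp only [Pi.neg_apply]; omega,
    .cons hy₁y₂.symm (.cons hzy₁.symm .nil), rfl⟩

end SimpleGraph

open SimpleGraph

/-- Abstract form of Proposition 2.4(2): under the rewiring properties (H1) and (H2),
for reachable `u, v` there is a vertex `w` with `f w = f u`, lying on a geodesic from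
`u` to `v`, such that `dist w v = |f u - f v|`. -/
theorem exists_intermediate_level_distance {V : Type*} (G : SimpleGraph V) (f : V → ℤ)
    (hf : ∀ u v : V, G.Adj u v → |f u - f v| = 1)
    (H1 : ∀ (m : ℤ) (u w v : V), G.Adj u w → G.Adj w v →
      f u = m → f w = m - 1 → f v = m →
      ∃ w' : V, G.Adj u w' ∧ G.Adj w' v ∧ f w' = m + 1)
    (H2 : ∀ (m : ℤ) (x₀ x₁ x₂ x₃ : V), G.Adj x₀ x₁ → G.Adj x₁ x₂ → G.Adj x₂ x₃ →
      f x₀ = m - 1 → f x₁ = m → f x₂ = m + 1 → f x₃ = m →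
      ∃ y₁ y₂ : V, G.Adj x₀ y₁ ∧ G.Adj y₁ y₂ ∧ G.Adj y₂ x₃ ∧ f y₁ = m ∧ f y₂ = m - 1)
    (u v : V) (huv : G.Reachable u v) :
    ∃ w : V, f w = f u ∧ G.dist u v = G.dist u w + G.dist w v ∧
      (G.dist w v : ℤ) = |f u - f v| := by
  suffices ∃ w, f w = f u ∧ G.dist v u = G.dist v w + G.dist w u ∧
      (G.dist v w : ℤ) = |f u - f v| by
    obtain ⟨w, hw, hsum, hdist⟩ := this
    exact ⟨w, hw, by rw [dist_comm, hsum, dist_comm, add_comm, dist_comm (u := w)],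
      by rwa [dist_comm]⟩
  rcases le_or_gt (f v) (f u) with hvu | huv'
  · obtain ⟨w, hw, hsum, hdist⟩ :=
      exists_dist_eq_dist_add_dist_of_liftsValleys hf one_le_two (liftsValleys_one H1) hvu huv.symm
    exact ⟨w, hw, hsum, by rw [hdist, abs_of_nonneg (by omega)]⟩
  · have hf' u v (h : G.Adj u v) : |(-f) u - (-f) v| = 1 := by
      rw [Pi.neg_apply, Pi.neg_apply, neg_sub_neg, abs_sub_comm]
      exact hf u v h
    obtain ⟨w, hw, hsum, hdist⟩ := exists_dist_eq_dist_add_dist_of_liftsValleys hf' le_rfl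
      (liftsValleys_neg_two hf H2) (neg_le_neg huv'.le) huv.symm
    simp only [Pi.neg_apply, neg_inj, neg_sub_neg] at hw hdist
    exact ⟨w, hw, hsum, by rw [hdist, abs_of_neg (by omega)]; ring⟩
end

section
/- Assume G and f satisfy the rewiring properties (H1) and (H2). Let u and v be reachable vertices with f u = f v. Then there exist k : ℕ and a sequence of vertices w₀ = u, w₁, …, w_k = v such that f wᵢ = f u for every i, G.dist w_{i−1} wᵢ = 2 for every i ∈ {1, …, k}, and G.dist u v = 2k. (Iterated form of Proposition 2.4(1), used implicitly in constructing the tables of minimal coherent band pathways: any minimal coherent band pathway between two links with the same number m of components can be decomposed into length-2 minimal pathways whose endpoints are all m-component links.) -/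
/-!
Push a geodesic from `u` to `v` towards the level `m = f u = f v`. A vertex at the global minimum
`μ ≤ m - 2` sits in a valley `μ + 1, μ, μ + 1`, which (H1) turns into a peak; the first vertex at
the global maximum `M ≥ m + 2` ends an ascent `M - 2, M - 1, M, M - 1`, which (H2) turns into
`M - 2, M - 1, M - 2, M - 1`. Both moves keep the endpoints and the length and decrease
`∑ |f - m|`, so eventually every vertex is within `1` of `m`. As `f` changes by one along each
edge, the vertices at even positions are then at level `m`, and any two of them at positions
`2i, 2i + 2` are at distance `2` because sub-walks of a geodesic are geodesics.
-/

def totalDeviation {V : Type*} (f : V → ℤ) (m : ℤ) (c : ℕ → V) (n : ℕ) : ℕ :=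
  ∑ j ∈ Finset.range (n + 1), (f (c j) - m).natAbs

lemma totalDeviation_lt {V : Type*} {f : V → ℤ} {m : ℤ} {c c' : ℕ → V} {n i : ℕ} (hi : i ≤ n)
    (hle : ∀ j ≤ n, (f (c' j) - m).natAbs ≤ (f (c j) - m).natAbs)
    (hlt : (f (c' i) - m).natAbs < (f (c i) - m).natAbs) :
    totalDeviation f m c' n < totalDeviation f m c n :=
  Finset.sum_lt_sum (fun j hj => hle j (Nat.lt_succ_iff.mp (Finset.mem_range.mp hj)))
    ⟨i, Finset.mem_range.mpr (Nat.lt_succ_of_le hi), hlt⟩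

namespace SimpleGraph

variable {V : Type*} {G : SimpleGraph V} {f : V → ℤ}

def IsAdjChain (G : SimpleGraph V) (c : ℕ → V) (n : ℕ) : Prop :=
  ∀ j < n, G.Adj (c j) (c (j + 1))

/-- Rewiring property (H1). -/
def ValleysFlip (G : SimpleGraph V) (f : V → ℤ) : Prop :=
  ∀ (m : ℤ) (u w v : V), G.Adj u w → G.Adj w v → f u = m → f w = m - 1 → f v = m →
    ∃ w' : V, G.Adj u w' ∧ G.Adj w' v ∧ f w' = m + 1

/-- Rewiring property (H2). -/
def PeaksLower (G : SimpleGraph V) (f : V → ℤ) : Prop :=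
  ∀ (m : ℤ) (x₀ x₁ x₂ x₃ : V), G.Adj x₀ x₁ → G.Adj x₁ x₂ → G.Adj x₂ x₃ →
    f x₀ = m - 1 → f x₁ = m → f x₂ = m + 1 → f x₃ = m →
    ∃ y₁ y₂ : V, G.Adj x₀ y₁ ∧ G.Adj y₁ y₂ ∧ G.Adj y₂ x₃ ∧ f y₁ = m ∧ f y₂ = m - 1

lemma Walk.isAdjChain_getVert {u v : V} (p : G.Walk u v) : G.IsAdjChain p.getVert p.length :=
  fun _ hj => p.adj_getVert_succ hj

namespace IsAdjChain

variable {c : ℕ → V} {n : ℕ} {m : ℤ}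

lemma exists_walk (hc : G.IsAdjChain c n) {a b : ℕ} (hab : a ≤ b) (hb : b ≤ n) :
    ∃ p : G.Walk (c a) (c b), p.length = b - a := by
  induction b, hab using Nat.le_induction with
  | base => exact ⟨.nil, by simp⟩
  | succ b hab ih =>
    obtain ⟨p, hp⟩ := ih (by omega)
    exact ⟨p.concat (hc b (by omega)), by rw [Walk.length_concat, hp]; omega⟩

lemma reachable (hc : G.IsAdjChain c n) {a b : ℕ} (hab : a ≤ b) (hb : b ≤ n) :
    G.Reachable (c a) (c b) :=
  ⟨(hc.exists_walk hab hb).choose⟩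

lemma dist_le (hc : G.IsAdjChain c n) {a b : ℕ} (hab : a ≤ b) (hb : b ≤ n) :
    G.dist (c a) (c b) ≤ b - a := by
  obtain ⟨p, hp⟩ := hc.exists_walk hab hb
  exact hp ▸ G.dist_le p

lemma dist_eq_sub (hc : G.IsAdjChain c n) (hgeo : G.dist (c 0) (c n) = n) {a b : ℕ}
    (hab : a ≤ b) (hb : b ≤ n) : G.dist (c a) (c b) = b - a := by
  have hgeo_le : n ≤ a + G.dist (c a) (c b) + (n - b) :=
    calc n = G.dist (c 0) (c n) := hgeo.symm
      _ ≤ G.dist (c 0) (c a) + G.dist (c a) (c n) :=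
        (hc.reachable (Nat.zero_le a) (hab.trans hb)).dist_triangle_left _
      _ ≤ G.dist (c 0) (c a) + (G.dist (c a) (c b) + G.dist (c b) (c n)) := by
        gcongr; exact (hc.reachable hab hb).dist_triangle_left _
      _ ≤ a + G.dist (c a) (c b) + (n - b) := by
        have h0a := hc.dist_le (Nat.zero_le a) (hab.trans hb)
        have hbn := hc.dist_le hb le_rfl
        omega
  have := hc.dist_le hab hb
  omega

lemma splice (hc : G.IsAdjChain c n) {c' : ℕ → V} {a b : ℕ}
    (hout : ∀ j, j ≤ a ∨ b ≤ j → c' j = c j)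
    (hin : ∀ j, a ≤ j → j < b → G.Adj (c' j) (c' (j + 1))) : G.IsAdjChain c' n := by
  intro j hj
  by_cases h : a ≤ j ∧ j < b
  · exact hin j h.1 h.2
  · rw [hout j (by omega), hout (j + 1) (by omega)]
    exact hc j hj

lemma apply_succ (hf : ∀ u v : V, G.Adj u v → |f u - f v| = 1) (hc : G.IsAdjChain c n) {j : ℕ}
    (hj : j < n) : f (c (j + 1)) = f (c j) + 1 ∨ f (c (j + 1)) = f (c j) - 1 := by
  have := (abs_eq zero_le_one).mp (hf _ _ (hc j hj))
  omega

lemma even_sub (hf : ∀ u v : V, G.Adj u v → |f u - f v| = 1) (hc : G.IsAdjChain c n) {j : ℕ}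
    (hj : j ≤ n) : Even (f (c j) - f (c 0) - j) := by
  induction j with
  | zero => simp
  | succ j ih =>
    have hpar := ih (by omega)
    have hstep := hc.apply_succ hf (j := j) (by omega)
    rw [Int.even_iff] at hpar ⊢
    push_cast
    omega

lemma exists_flip_valley (H1 : G.ValleysFlip f) (hc : G.IsAdjChain c n) {p : ℕ}
    (hp : p + 2 ≤ n) (h₀ : f (c p) = f (c (p + 1)) + 1) (h₂ : f (c (p + 2)) = f (c (p + 1)) + 1) :
    ∃ c' : ℕ → V, G.IsAdjChain c' n ∧ (∀ j ≠ p + 1, c' j = c j) ∧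
      f (c' (p + 1)) = f (c (p + 1)) + 2 := by
  obtain ⟨w, hw₀, hw₂, hfw⟩ :=
    H1 _ _ _ _ (hc p (by omega)) (hc (p + 1) (by omega)) h₀ (by ring) h₂
  refine ⟨Function.update c (p + 1) w, hc.splice (a := p) (b := p + 2)
    (fun j hj => Function.update_of_ne (by omega) _ _) (fun j hj hj' => ?_),
    fun j hj => Function.update_of_ne hj _ _, by simp only [Function.update_self, hfw]; ring⟩
  obtain rfl | rfl : j = p ∨ j = p + 1 := by omega
  · simpa using hw₀
  · simpa using hw₂

lemma exists_lower_peak (H2 : G.PeaksLower f) (hc : G.IsAdjChain c n) {p : ℕ}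
    (hp : p + 3 ≤ n) (h₀ : f (c p) = f (c (p + 2)) - 2) (h₁ : f (c (p + 1)) = f (c (p + 2)) - 1)
    (h₃ : f (c (p + 3)) = f (c (p + 2)) - 1) :
    ∃ c' : ℕ → V, G.IsAdjChain c' n ∧ (∀ j, j ≠ p + 1 → j ≠ p + 2 → c' j = c j) ∧
      f (c' (p + 1)) = f (c (p + 1)) ∧ f (c' (p + 2)) = f (c (p + 2)) - 2 := by
  obtain ⟨y₁, y₂, hy₀, hy₁, hy₃, hfy₁, hfy₂⟩ :=
    H2 _ _ _ _ _ (hc p (by omega)) (hc (p + 1) (by omega)) (hc (p + 2) (by omega))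
      (by rw [h₀]; ring) h₁ (by ring) h₃
  refine ⟨Function.update (Function.update c (p + 1) y₁) (p + 2) y₂,
    hc.splice (a := p) (b := p + 3) (fun j hj => ?_) (fun j hj hj' => ?_),
    fun j hj₁ hj₂ => by rw [Function.update_of_ne hj₂, Function.update_of_ne hj₁], ?_, ?_⟩
  · rw [Function.update_of_ne (by omega), Function.update_of_ne (by omega)]
  · obtain rfl | rfl | rfl : j = p ∨ j = p + 1 ∨ j = p + 2 := by omega
    · simpa using hy₀
    · simpa using hy₁
    · simpa using hy₃
  · simp [hfy₁, h₁]
  · simp only [Function.update_self, hfy₂]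
    ring

lemma exists_valley_of_le_sub_two (hf : ∀ u v : V, G.Adj u v → |f u - f v| = 1)
    (hc : G.IsAdjChain c n) (h0 : f (c 0) = m) (hn : f (c n) = m)
    (hlow : ∃ j ≤ n, f (c j) ≤ m - 2) :
    ∃ p, p + 2 ≤ n ∧ f (c (p + 1)) ≤ m - 2 ∧ f (c p) = f (c (p + 1)) + 1 ∧
      f (c (p + 2)) = f (c (p + 1)) + 1 := by
  obtain ⟨i, hi, hmin⟩ := (Finset.range (n + 1)).exists_min_image (f ∘ c) ⟨0, by simp⟩
  simp only [Finset.mem_range, Function.comp_apply] at hi hmin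
  obtain ⟨j, hj, hfj⟩ := hlow
  have hfi : f (c i) ≤ m - 2 := (hmin j (by omega)).trans hfj
  have hi0 : i ≠ 0 := by rintro rfl; omega
  have hin : i ≠ n := by rintro rfl; omega
  obtain ⟨p, rfl⟩ : ∃ p, i = p + 1 := ⟨i - 1, by omega⟩
  refine ⟨p, by omega, hfi, ?_, ?_⟩
  · have := hc.apply_succ hf (j := p) (by omega)
    have := hmin p (by omega)
    omega
  · have : f (c (p + 2)) = f (c (p + 1)) + 1 ∨ f (c (p + 2)) = f (c (p + 1)) - 1 :=
      hc.apply_succ hf (by omega)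
    have := hmin (p + 2) (by omega)
    omega

lemma exists_ascent_of_add_two_le (hf : ∀ u v : V, G.Adj u v → |f u - f v| = 1)
    (hc : G.IsAdjChain c n) (h0 : f (c 0) = m) (hn : f (c n) = m)
    (hhigh : ∃ j ≤ n, m + 2 ≤ f (c j)) :
    ∃ p, p + 3 ≤ n ∧ m + 2 ≤ f (c (p + 2)) ∧ f (c p) = f (c (p + 2)) - 2 ∧
      f (c (p + 1)) = f (c (p + 2)) - 1 ∧ f (c (p + 3)) = f (c (p + 2)) - 1 := by
  classical
  obtain ⟨i, hi, hmax⟩ := (Finset.range (n + 1)).exists_max_image (f ∘ c) ⟨0, by simp⟩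
  simp only [Finset.mem_range, Function.comp_apply] at hi hmax
  have hfirst : ∃ q, q ≤ n ∧ f (c q) = f (c i) := ⟨i, by omega, rfl⟩
  obtain ⟨hq, hfq⟩ := Nat.find_spec hfirst
  have hbefore : ∀ j < Nat.find hfirst, f (c j) ≠ f (c i) := fun j hj hfj =>
    Nat.find_min hfirst hj ⟨by omega, hfj⟩
  obtain ⟨j, hj, hfj⟩ := hhigh
  have hM : m + 2 ≤ f (c i) := hfj.trans (hmax j (by omega))
  have hq0 : Nat.find hfirst ≠ 0 := by intro hq0; rw [hq0] at hfq; omega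
  have hq1 : Nat.find hfirst ≠ 1 := by
    intro hq1
    rw [hq1] at hfq
    have : f (c 1) = f (c 0) + 1 ∨ f (c 1) = f (c 0) - 1 := hc.apply_succ hf (by omega)
    omega
  have hqn : Nat.find hfirst ≠ n := by intro hqn; rw [hqn] at hfq; omega
  obtain ⟨p, hpq⟩ : ∃ p, Nat.find hfirst = p + 2 := ⟨Nat.find hfirst - 2, by omega⟩
  rw [hpq] at hfq hbefore hq
  have h₁ : f (c (p + 1)) = f (c i) - 1 := by
    have : f (c (p + 2)) = f (c (p + 1)) + 1 ∨ f (c (p + 2)) = f (c (p + 1)) - 1 :=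
      hc.apply_succ hf (by omega)
    have := hmax (p + 1) (by omega)
    have := hbefore (p + 1) (by omega)
    omega
  refine ⟨p, by omega, by omega, ?_, by omega, ?_⟩
  · have := hc.apply_succ hf (j := p) (by omega)
    have := hbefore p (by omega)
    omega
  · have : f (c (p + 3)) = f (c (p + 2)) + 1 ∨ f (c (p + 3)) = f (c (p + 2)) - 1 :=
      hc.apply_succ hf (by omega)
    have := hmax (p + 3) (by omega)
    omega

lemma exists_totalDeviation_lt_of_le_sub_two (hf : ∀ u v : V, G.Adj u v → |f u - f v| = 1)
    (H1 : G.ValleysFlip f) (hc : G.IsAdjChain c n) (h0 : f (c 0) = m) (hn : f (c n) = m)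
    (hlow : ∃ j ≤ n, f (c j) ≤ m - 2) :
    ∃ c' : ℕ → V, G.IsAdjChain c' n ∧ c' 0 = c 0 ∧ c' n = c n ∧
      totalDeviation f m c' n < totalDeviation f m c n := by
  obtain ⟨p, hp, hlevel, h₀, h₂⟩ := hc.exists_valley_of_le_sub_two hf h0 hn hlow
  obtain ⟨c', hc', heq, hval⟩ := hc.exists_flip_valley H1 hp h₀ h₂
  refine ⟨c', hc', heq 0 (by omega), heq n (by omega),
    totalDeviation_lt (i := p + 1) (by omega) (fun j _ => ?_) (by omega)⟩
  rcases eq_or_ne j (p + 1) with rfl | hj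
  · omega
  · rw [heq j hj]

lemma exists_totalDeviation_lt_of_add_two_le (hf : ∀ u v : V, G.Adj u v → |f u - f v| = 1)
    (H2 : G.PeaksLower f) (hc : G.IsAdjChain c n) (h0 : f (c 0) = m) (hn : f (c n) = m)
    (hhigh : ∃ j ≤ n, m + 2 ≤ f (c j)) :
    ∃ c' : ℕ → V, G.IsAdjChain c' n ∧ c' 0 = c 0 ∧ c' n = c n ∧
      totalDeviation f m c' n < totalDeviation f m c n := by
  obtain ⟨p, hp, hlevel, h₀, h₁, h₃⟩ := hc.exists_ascent_of_add_two_le hf h0 hn hhigh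
  obtain ⟨c', hc', heq, hval₁, hval₂⟩ := hc.exists_lower_peak H2 hp h₀ h₁ h₃
  refine ⟨c', hc', heq 0 (by omega) (by omega), heq n (by omega) (by omega),
    totalDeviation_lt (i := p + 2) (by omega) (fun j _ => ?_) (by omega)⟩
  by_cases hj : j = p + 1 ∨ j = p + 2
  · rcases hj with rfl | rfl <;> omega
  · rw [heq j (by omega) (by omega)]

lemma exists_totalDeviation_lt (hf : ∀ u v : V, G.Adj u v → |f u - f v| = 1)
    (H1 : G.ValleysFlip f) (H2 : G.PeaksLower f) (hc : G.IsAdjChain c n) (h0 : f (c 0) = m)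
    (hn : f (c n) = m) (hfar : ∃ j ≤ n, 1 < |f (c j) - m|) :
    ∃ c' : ℕ → V, G.IsAdjChain c' n ∧ c' 0 = c 0 ∧ c' n = c n ∧
      totalDeviation f m c' n < totalDeviation f m c n := by
  by_cases hlow : ∃ j ≤ n, f (c j) ≤ m - 2
  · exact hc.exists_totalDeviation_lt_of_le_sub_two hf H1 h0 hn hlow
  · push Not at hlow
    obtain ⟨j, hj, hfj⟩ := hfar
    have := hlow j hj
    exact hc.exists_totalDeviation_lt_of_add_two_le hf H2 h0 hn
      ⟨j, hj, by rw [lt_abs] at hfj; omega⟩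

theorem exists_abs_sub_le_one (hf : ∀ u v : V, G.Adj u v → |f u - f v| = 1)
    (H1 : G.ValleysFlip f) (H2 : G.PeaksLower f) (hc : G.IsAdjChain c n) (h0 : f (c 0) = m)
    (hn : f (c n) = m) :
    ∃ c' : ℕ → V, G.IsAdjChain c' n ∧ c' 0 = c 0 ∧ c' n = c n ∧ ∀ j ≤ n, |f (c' j) - m| ≤ 1 := by
  induction hd : totalDeviation f m c n using Nat.strong_induction_on generalizing c with
  | _ d ih =>
  by_cases hfar : ∃ j ≤ n, 1 < |f (c j) - m|
  · obtain ⟨c', hc', h0', hn', hlt⟩ := hc.exists_totalDeviation_lt hf H1 H2 h0 hn hfar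
    obtain ⟨c'', hc'', h0'', hn'', hnear⟩ :=
      ih _ (hd ▸ hlt) hc' (h0' ▸ h0) (hn' ▸ hn) rfl
    exact ⟨c'', hc'', h0''.trans h0', hn''.trans hn', hnear⟩
  · push Not at hfar
    exact ⟨c, hc, rfl, rfl, hfar⟩

theorem exists_two_step_decomposition (hf : ∀ u v : V, G.Adj u v → |f u - f v| = 1)
    (hc : G.IsAdjChain c n) (hgeo : G.dist (c 0) (c n) = n) (hn : f (c n) = f (c 0))
    (hnear : ∀ j ≤ n, |f (c j) - f (c 0)| ≤ 1) :
    ∃ (k : ℕ) (w : Fin (k + 1) → V), w 0 = c 0 ∧ w (Fin.last k) = c n ∧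
      (∀ i : Fin (k + 1), f (w i) = f (c 0)) ∧
      (∀ i : Fin k, G.dist (w i.castSucc) (w i.succ) = 2) ∧ n = 2 * k := by
  obtain ⟨k, hk⟩ : Even n := by
    have := hc.even_sub hf le_rfl
    rw [hn, Int.even_iff] at this
    exact Nat.even_iff.mpr (by omega)
  have hlevel : ∀ j ≤ n, Even j → f (c j) = f (c 0) := by
    intro j hj hje
    have hpar := hc.even_sub hf hj
    have hnear_j := abs_le.mp (hnear j hj)
    rw [Int.even_iff] at hpar
    rw [Nat.even_iff] at hje
    omega
  refine ⟨k, fun i => c (2 * i), rfl, by simp [hk, two_mul],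
    fun i => hlevel _ (by omega) (even_two_mul _), fun i => ?_, by omega⟩
  simp only [Fin.val_castSucc, Fin.val_succ]
  rw [hc.dist_eq_sub hgeo (by omega) (by omega)]
  omega

end IsAdjChain

end SimpleGraph

/-- Iterated form of Proposition 2.4(1): under the rewiring properties (H1) and (H2),
any minimal pathway between reachable vertices `u, v` with `f u = f v` decomposes into
length-2 minimal pathways whose endpoints all have the same `f`-value as `u`. -/
theorem exists_chain_of_length_two_geodesics {V : Type*} (G : SimpleGraph V) (f : V → ℤ)
    (hf : ∀ u v : V, G.Adj u v → |f u - f v| = 1)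
    (H1 : ∀ (m : ℤ) (u w v : V), G.Adj u w → G.Adj w v →
      f u = m → f w = m - 1 → f v = m →
      ∃ w' : V, G.Adj u w' ∧ G.Adj w' v ∧ f w' = m + 1)
    (H2 : ∀ (m : ℤ) (x₀ x₁ x₂ x₃ : V), G.Adj x₀ x₁ → G.Adj x₁ x₂ → G.Adj x₂ x₃ →
      f x₀ = m - 1 → f x₁ = m → f x₂ = m + 1 → f x₃ = m →
      ∃ y₁ y₂ : V, G.Adj x₀ y₁ ∧ G.Adj y₁ y₂ ∧ G.Adj y₂ x₃ ∧ f y₁ = m ∧ f y₂ = m - 1)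
    (u v : V) (huv : G.Reachable u v) (hfuv : f u = f v) :
    ∃ (k : ℕ) (w : Fin (k + 1) → V), w 0 = u ∧ w (Fin.last k) = v ∧
      (∀ i : Fin (k + 1), f (w i) = f u) ∧
      (∀ i : Fin k, G.dist (w i.castSucc) (w i.succ) = 2) ∧
      G.dist u v = 2 * k := by
  obtain ⟨p, hp⟩ := huv.exists_walk_length_eq_dist
  obtain ⟨c, hc, hc0, hcn, hnear⟩ := p.isAdjChain_getVert.exists_abs_sub_le_one hf H1 H2
    (m := f u) (by rw [p.getVert_zero]) (by rw [p.getVert_length, hfuv])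
  rw [p.getVert_zero] at hc0
  rw [p.getVert_length] at hcn
  obtain ⟨k, w, hw0, hwk, hwf, hw2, hk⟩ := hc.exists_two_step_decomposition hf
    (by rw [hc0, hcn, hp]) (by rw [hc0, hcn, hfuv]) (by rwa [hc0])
  rw [hc0] at hw0 hwf
  rw [hcn] at hwk
  exact ⟨k, w, hw0, hwk, hwf, hw2, hp.symm.trans hk⟩
end
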